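/- arXiv:1403.2572 — 2 statements merged into one kernel-verified Lean document; each statement's English description precedes it below -/
import Mathlib

section
/- Let L := K(x1, x2). Then exactly one of the following four cases holds: (1) [K_m : L] = 1; (2) [K_m : L] = 2 and L(y1·y2) = K_m; (3) [K_m : L] = 2, y1·y2 ∈ L, and L(y1) = L(y2) = K_m; (4) [K_m : L] = 4 and [L(y1·y2) : L] = 2. -/
/-- The short Weierstrass curve `y² = x³ + A·x + B` base-changed to `F`: its coefficients are
the images under `algebraMap K F` of `A, B ∈ K`. -/
def baseW (K F : Type*) [Field K] [Field F] [Algebra K F] (A B : K) :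
    WeierstrassCurve.Affine F :=
  { a₁ := 0, a₂ := 0, a₃ := 0, a₄ := algebraMap K F A, a₆ := algebraMap K F B }

open Classical in
/-- `K(E[m])`: the intermediate field of `F/K` generated by the coordinates of all `m`-torsion
points of the curve `W`. -/
noncomputable def torsionField (K : Type*) {F : Type*} [Field K] [Field F] [Algebra K F]
    (W : WeierstrassCurve.Affine F) (m : ℕ) : IntermediateField K F :=
  IntermediateField.adjoin K
    {c | ∃ (x y : F) (h : W.Nonsingular x y),
      m • (WeierstrassCurve.Affine.Point.some _ _ h : WeierstrassCurve.Affine.Point W) = 0 ∧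
      (c = x ∨ c = y)}

open Classical in
/-- `K_{m,x}`: the intermediate field of `F/K` generated by the x-coordinates of all `m`-torsion
points of the curve `W`. -/
noncomputable def torsionXField (K : Type*) {F : Type*} [Field K] [Field F] [Algebra K F]
    (W : WeierstrassCurve.Affine F) (m : ℕ) : IntermediateField K F :=
  IntermediateField.adjoin K
    {c | ∃ (y : F) (h : W.Nonsingular c y),
      m • (WeierstrassCurve.Affine.Point.some _ _ h : WeierstrassCurve.Affine.Point W) = 0}

open Classical in
/-- `P, Q` form a `ℤ/mℤ`-basis of the `m`-torsion subgroup `E[m]`. -/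
def IsTorsionBasis {F : Type*} [Field F] {W : WeierstrassCurve.Affine F}
    (m : ℕ) (P Q : WeierstrassCurve.Affine.Point W) : Prop :=
  m • P = 0 ∧ m • Q = 0 ∧
  (∀ R : WeierstrassCurve.Affine.Point W, m • R = 0 → ∃ a b : ℤ, R = a • P + b • Q) ∧
  (∀ a b : ℤ, a • P + b • Q = 0 → (m : ℤ) ∣ a ∧ (m : ℤ) ∣ b)

/-- The coordinatewise Galois action: the automorphism `σ` sends the point `P` to the point
`Q`. -/
def galSends {K F : Type*} [Field K] [Field F] [Algebra K F] {W : WeierstrassCurve.Affine F}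
    (σ : F ≃ₐ[K] F) (P Q : WeierstrassCurve.Affine.Point W) : Prop :=
  (P = 0 ∧ Q = 0) ∨
  (∃ (x y x' y' : F) (h : W.Nonsingular x y) (h' : W.Nonsingular x' y'),
    P = WeierstrassCurve.Affine.Point.some _ _ h ∧ Q = WeierstrassCurve.Affine.Point.some _ _ h' ∧
    σ x = x' ∧ σ y = y')

/-!
`K_m = L(y₁, y₂)` with `y_i² = x_i³ + A x_i + B ∈ L`: the points with coordinates in a subfield `M`
form a subgroup (the image of the base change from `M`), so all of `E[m] = ⟨P₁, P₂⟩` has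
coordinates in `L(y₁, y₂)`. The four cases are those of a possibly degenerate biquadratic
extension, according to which of `y₁, y₂, y₁y₂` lie in `L`. If none does, then `y₂ ∉ L(y₁)`:
writing `y₂ = a + b y₁` gives `2ab y₁ ∈ L`, forcing `a = 0` or `b = 0`. A zero `y_i` cannot spoil
the case distinction, because `y₁ = 0 ↔ y₂ = 0`: a basis vector of order `2` forces `m ∣ 2`.
-/
open IntermediateField

namespace IntermediateField

variable {K F : Type*} [Field K] [Field F] [Algebra K F] {E : IntermediateField K F} {a s t u : F}

section SquareRoot

open Polynomial

theorem isIntegral_of_sq_mem (hs : s ^ 2 ∈ E) : IsIntegral E s :=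
  IsIntegral.of_pow two_pos (isIntegral_algebraMap (x := (⟨s ^ 2, hs⟩ : E)))

theorem natDegree_minpoly_le_two_of_sq_mem (hs : s ^ 2 ∈ E) : (minpoly E s).natDegree ≤ 2 := by
  have hq : (X ^ 2 - C (⟨s ^ 2, hs⟩ : E)).Monic := monic_X_pow_sub_C _ two_ne_zero
  have := natDegree_le_of_dvd (minpoly.dvd E s (by simp)) hq.ne_zero
  rwa [natDegree_X_pow_sub_C] at this

theorem natDegree_minpoly_eq_two_of_sq_mem (hs : s ^ 2 ∈ E) (hsE : s ∉ E) :
    (minpoly E s).natDegree = 2 :=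
  (natDegree_minpoly_le_two_of_sq_mem hs).antisymm <|
    (minpoly.two_le_natDegree_iff (isIntegral_of_sq_mem hs)).mpr fun ⟨c, hc⟩ ↦ hsE (hc ▸ c.2)

theorem extendScalars_sup_adjoin_simple :
    extendScalars (le_sup_left : E ≤ E ⊔ K⟮t⟯) = E⟮t⟯ :=
  restrictScalars_injective K <| by
    rw [extendScalars_restrictScalars, restrictScalars_adjoin_eq_sup]

theorem relfinrank_sup_adjoin_simple_of_sq_mem (ht : t ^ 2 ∈ E) (htE : t ∉ E) :
    relfinrank E (E ⊔ K⟮t⟯) = 2 := by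
  rw [relfinrank_eq_finrank_of_le le_sup_left, extendScalars_sup_adjoin_simple,
    adjoin.finrank (isIntegral_of_sq_mem ht), natDegree_minpoly_eq_two_of_sq_mem ht htE]

theorem exists_eq_add_mul_of_mem_sup_adjoin_simple (hs : s ^ 2 ∈ E) (hu : u ∈ E ⊔ K⟮s⟯) :
    ∃ a ∈ E, ∃ b ∈ E, u = a + b * s := by
  rw [← restrictScalars_adjoin_eq_sup] at hu
  let pb := adjoin.powerBasis (isIntegral_of_sq_mem hs)
  obtain ⟨f, hf, hu⟩ := pb.exists_eq_aeval ⟨u, hu⟩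
  obtain ⟨b, a, rfl⟩ := exists_eq_X_add_C_of_natDegree_le_one
    (Nat.le_of_lt_succ (hf.trans_le (natDegree_minpoly_le_two_of_sq_mem hs)))
  refine ⟨a, a.2, b, b.2, ?_⟩
  rw [map_add, map_mul, aeval_C, aeval_C, aeval_X] at hu
  rw [add_comm]
  exact congrArg Subtype.val hu

end SquareRoot

theorem sup_adjoin_simple_eq_left (ht : t ∈ E) : E ⊔ K⟮t⟯ = E :=
  sup_eq_left.mpr (adjoin_simple_le_iff.mpr ht)

theorem mem_sup_adjoin_simple_of_mul_mem (ha : a ≠ 0) (h : a * u ∈ E) : u ∈ E ⊔ K⟮a⟯ := by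
  rw [← inv_mul_cancel_left₀ ha u]
  exact mul_mem (inv_mem (le_sup_right (a := E) (mem_adjoin_simple_self K a)))
    (le_sup_left (a := E) h)

theorem sup_adjoin_simple_mul_eq (ha : a ∈ E) (ha0 : a ≠ 0) : E ⊔ K⟮a * t⟯ = E ⊔ K⟮t⟯ :=
  le_antisymm
    (sup_le le_sup_left <| adjoin_simple_le_iff.mpr <|
      mul_mem (le_sup_left (a := E) ha) (le_sup_right (a := E) (mem_adjoin_simple_self K t)))
    (sup_le le_sup_left <| adjoin_simple_le_iff.mpr <| by
      simpa [ha0] using mul_mem (inv_mem (le_sup_left (a := E) ha))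
        (le_sup_right (a := E) (mem_adjoin_simple_self K (a * t))))

theorem sup_adjoin_simple_sup_adjoin_simple_eq_of_mem (hs : s ∈ E) (hs0 : s ≠ 0) :
    E ⊔ K⟮s⟯ ⊔ K⟮t⟯ = E ⊔ K⟮s * t⟯ := by
  rw [sup_adjoin_simple_eq_left hs, sup_adjoin_simple_mul_eq hs hs0]

theorem mem_or_mul_mem_of_mem_sup_adjoin_simple (h2 : (2 : F) ≠ 0) (hs : s ^ 2 ∈ E)
    (hsE : s ∉ E) (ht : t ^ 2 ∈ E) (htE : t ∈ E ⊔ K⟮s⟯) : t ∈ E ∨ s * t ∈ E := by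
  obtain ⟨a, ha, b, hb, rfl⟩ := exists_eq_add_mul_of_mem_sup_adjoin_simple hs htE
  by_cases hb0 : b = 0
  · exact .inl (by simpa [hb0] using ha)
  by_cases ha0 : a = 0
  · have : s * (a + b * s) = b * s ^ 2 := by rw [ha0]; ring
    exact .inr (this ▸ mul_mem hb hs)
  have h2ab : 2 * a * b ≠ 0 := mul_ne_zero (mul_ne_zero h2 ha0) hb0
  have hmem : 2 * a * b * s ∈ E := by
    have : 2 * a * b * s = (a + b * s) ^ 2 - a ^ 2 - b ^ 2 * s ^ 2 := by ring
    rw [this]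
    exact sub_mem (sub_mem ht (pow_mem ha 2)) (mul_mem (pow_mem hb 2) hs)
  refine absurd ?_ hsE
  rw [← inv_mul_cancel_left₀ h2ab s]
  exact mul_mem (inv_mem (mul_mem (mul_mem (ofNat_mem E 2) ha) hb)) hmem

theorem relfinrank_sup_adjoin_simple_sup_adjoin_simple_eq_four (h2 : (2 : F) ≠ 0)
    (hs : s ^ 2 ∈ E) (ht : t ^ 2 ∈ E) (hsE : s ∉ E) (htE : t ∉ E) (hstE : s * t ∉ E) :
    relfinrank E (E ⊔ K⟮s⟯ ⊔ K⟮t⟯) = 4 := by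
  have ht' : t ∉ E ⊔ K⟮s⟯ := fun h ↦
    (mem_or_mul_mem_of_mem_sup_adjoin_simple h2 hs hsE ht h).elim htE hstE
  rw [← relfinrank_mul_relfinrank le_sup_left le_sup_left,
    relfinrank_sup_adjoin_simple_of_sq_mem hs hsE,
    relfinrank_sup_adjoin_simple_of_sq_mem (le_sup_left (a := E) ht) ht']

theorem biquadratic_cases (h2 : (2 : F) ≠ 0) (hs : s ^ 2 ∈ E) (ht : t ^ 2 ∈ E)
    (hst : s = 0 ↔ t = 0) :
    relfinrank E (E ⊔ K⟮s⟯ ⊔ K⟮t⟯) = 1 ∨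
    relfinrank E (E ⊔ K⟮s⟯ ⊔ K⟮t⟯) = 2 ∧ E ⊔ K⟮s * t⟯ = E ⊔ K⟮s⟯ ⊔ K⟮t⟯ ∨
    relfinrank E (E ⊔ K⟮s⟯ ⊔ K⟮t⟯) = 2 ∧ s * t ∈ E ∧
      E ⊔ K⟮s⟯ = E ⊔ K⟮s⟯ ⊔ K⟮t⟯ ∧ E ⊔ K⟮t⟯ = E ⊔ K⟮s⟯ ⊔ K⟮t⟯ ∨
    relfinrank E (E ⊔ K⟮s⟯ ⊔ K⟮t⟯) = 4 ∧ relfinrank E (E ⊔ K⟮s * t⟯) = 2 := by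
  have hst2 : (s * t) ^ 2 ∈ E := mul_pow s t 2 ▸ mul_mem hs ht
  by_cases hstE : s * t ∈ E
  · by_cases hsE : s ∈ E
    · have htE : t ∈ E := by
        rcases eq_or_ne s 0 with hs0 | hs0
        · exact hst.mp hs0 ▸ zero_mem E
        · simpa [hs0] using mul_mem (inv_mem hsE) hstE
      left
      rw [sup_adjoin_simple_eq_left hsE, sup_adjoin_simple_eq_left htE, relfinrank_self]
    have hs0 : s ≠ 0 := fun h ↦ hsE (h ▸ zero_mem E)
    have ht0 : t ≠ 0 := mt hst.mpr hs0
    have hMs : E ⊔ K⟮s⟯ ⊔ K⟮t⟯ = E ⊔ K⟮s⟯ :=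
      sup_adjoin_simple_eq_left (mem_sup_adjoin_simple_of_mul_mem hs0 hstE)
    have hMt : E ⊔ K⟮s⟯ ⊔ K⟮t⟯ = E ⊔ K⟮t⟯ := by
      rw [sup_right_comm]
      exact sup_adjoin_simple_eq_left (mem_sup_adjoin_simple_of_mul_mem ht0 (mul_comm s t ▸ hstE))
    refine .inr (.inr (.inl ⟨?_, hstE, hMs.symm, hMt.symm⟩))
    rw [hMs]
    exact relfinrank_sup_adjoin_simple_of_sq_mem hs hsE
  have hs0 : s ≠ 0 := by rintro rfl; simp at hstE
  have ht0 : t ≠ 0 := by rintro rfl; simp at hstE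
  by_cases hsE_or_htE : s ∈ E ∨ t ∈ E
  · have hM : E ⊔ K⟮s⟯ ⊔ K⟮t⟯ = E ⊔ K⟮s * t⟯ := by
      rcases hsE_or_htE with hsE | htE
      · exact sup_adjoin_simple_sup_adjoin_simple_eq_of_mem hsE hs0
      · rw [sup_right_comm, sup_adjoin_simple_sup_adjoin_simple_eq_of_mem htE ht0, mul_comm]
    refine .inr (.inl ⟨?_, hM.symm⟩)
    rw [hM]
    exact relfinrank_sup_adjoin_simple_of_sq_mem hst2 hstE
  rw [not_or] at hsE_or_htE
  exact .inr (.inr (.inr ⟨relfinrank_sup_adjoin_simple_sup_adjoin_simple_eq_four h2 hs ht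
    hsE_or_htE.1 hsE_or_htE.2 hstE, relfinrank_sup_adjoin_simple_of_sq_mem hst2 hstE⟩))

theorem biquadratic_exactly_one_case (h2 : (2 : F) ≠ 0) (hs : s ^ 2 ∈ E) (ht : t ^ 2 ∈ E)
    (hst : s = 0 ↔ t = 0) {M : IntermediateField K F} (hM : M = E ⊔ K⟮s⟯ ⊔ K⟮t⟯) :
    let c1 : Prop := relfinrank E M = 1
    let c2 : Prop := relfinrank E M = 2 ∧ E ⊔ K⟮s * t⟯ = M
    let c3 : Prop := relfinrank E M = 2 ∧ s * t ∈ E ∧ E ⊔ K⟮s⟯ = M ∧ E ⊔ K⟮t⟯ = M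
    let c4 : Prop := relfinrank E M = 4 ∧ relfinrank E (E ⊔ K⟮s * t⟯) = 2
    (c1 ∧ ¬c2 ∧ ¬c3 ∧ ¬c4) ∨ (¬c1 ∧ c2 ∧ ¬c3 ∧ ¬c4) ∨
      (¬c1 ∧ ¬c2 ∧ c3 ∧ ¬c4) ∨ (¬c1 ∧ ¬c2 ∧ ¬c3 ∧ c4) := by
  intro c1 c2 c3 c4
  have hc23 : c2 → ¬c3 := fun ⟨hr, hE⟩ ⟨_, hstE, _⟩ ↦ by
    rw [sup_adjoin_simple_eq_left hstE] at hE
    simp [hE] at hr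
  subst hM
  rcases biquadratic_cases h2 hs ht hst with h | h | h | h
  · exact .inl ⟨h, by omega, by omega, by omega⟩
  · exact .inr (.inl ⟨by omega, h, hc23 h, by omega⟩)
  · exact .inr (.inr (.inl ⟨by omega, fun h' ↦ hc23 h' h, h, by omega⟩))
  · exact .inr (.inr (.inr ⟨by omega, by omega, by omega, h⟩))

end IntermediateField

open WeierstrassCurve.Affine

section TwoTorsion

variable {F : Type*} [Field F] {W : WeierstrassCurve.Affine F}

theorem WeierstrassCurve.Affine.Point.two_nsmul_some_eq_zero_iff [DecidableEq F] {x y : F}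
    (h : W.Nonsingular x y) : 2 • some x y h = 0 ↔ y = W.negY x y := by
  rw [two_nsmul]
  refine ⟨fun h0 ↦ by_contra fun hy ↦ ?_, add_self_of_Y_eq⟩
  rw [add_self_of_Y_ne hy] at h0
  exact some_ne_zero _ h0

open scoped Classical

variable {m : ℕ} {P Q : W.Point}

theorem IsTorsionBasis.symm (h : IsTorsionBasis m P Q) : IsTorsionBasis m Q P :=
  ⟨h.2.1, h.1, fun R hR ↦ let ⟨a, b, hab⟩ := h.2.2.1 R hR; ⟨b, a, hab.trans (add_comm _ _)⟩,
    fun a b hab ↦ (h.2.2.2 b a (by rwa [add_comm])).symm⟩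

theorem IsTorsionBasis.two_nsmul_eq_zero (h : IsTorsionBasis m P Q) (hP : 2 • P = 0) :
    2 • Q = 0 := by
  obtain ⟨k, hk⟩ := (h.2.2.2 2 0 (by rwa [zero_zsmul, add_zero, two_zsmul, ← two_nsmul])).1
  rw [two_nsmul, ← two_zsmul, hk, mul_comm, mul_zsmul, natCast_zsmul, h.2.1, zsmul_zero]

end TwoTorsion

section baseW

variable {K F : Type*} [Field K] [Field F] [Algebra K F] {A B : K} {x y : F}

theorem baseW_negY : (baseW K F A B).negY x y = -y := by
  simp [WeierstrassCurve.Affine.negY, baseW]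

theorem baseW_equation_iff :
    (baseW K F A B).Equation x y ↔ y ^ 2 = x ^ 3 + algebraMap K F A * x + algebraMap K F B := by
  rw [equation_iff]
  simp [baseW]

theorem sq_mem_of_baseW_equation {M : IntermediateField K F} (h : (baseW K F A B).Equation x y)
    (hx : x ∈ M) : y ^ 2 ∈ M := by
  rw [baseW_equation_iff.mp h]
  exact add_mem (add_mem (pow_mem hx 3) (mul_mem (M.algebraMap_mem A) hx)) (M.algebraMap_mem B)

theorem baseW_two_nsmul_some_eq_zero_iff [DecidableEq F] (h2 : (2 : F) ≠ 0)
    (h : (baseW K F A B).Nonsingular x y) : 2 • Point.some x y h = 0 ↔ y = 0 := by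
  rw [Point.two_nsmul_some_eq_zero_iff, baseW_negY, eq_neg_iff_add_eq_zero, ← two_mul, mul_eq_zero,
    or_iff_right h2]

-- `(baseW K M A B)⁄F` is definitionally `baseW K F A B`, so the base change lands in its points.
theorem some_mem_range_baseChange_iff [DecidableEq F] (M : IntermediateField K F)
    (h : (baseW K F A B).Nonsingular x y) :
    Point.some x y h ∈ (Point.baseChange (W' := baseW K M A B) M F).range ↔ x ∈ M ∧ y ∈ M := by
  refine ⟨?_, fun ⟨hx, hy⟩ ↦ ⟨.some ⟨x, hx⟩ ⟨y, hy⟩ ((baseChange_nonsingular _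
    (f := Algebra.ofId M F) (algebraMap M F).injective _ _).mp h), rfl⟩⟩
  rintro ⟨_ | ⟨x', y', h'⟩, hP⟩
  · exact absurd hP.symm (Point.some_ne_zero h)
  · obtain ⟨rfl, rfl⟩ := Point.some.inj hP
    exact ⟨x'.2, y'.2⟩

open scoped Classical

variable {m : ℕ} {x1 y1 x2 y2 : F} {h1 : (baseW K F A B).Nonsingular x1 y1}
  {h2 : (baseW K F A B).Nonsingular x2 y2}

theorem torsionField_le_of_isTorsionBasis {M : IntermediateField K F}
    (hbasis : IsTorsionBasis m (Point.some x1 y1 h1) (Point.some x2 y2 h2))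
    (hx1 : x1 ∈ M) (hy1 : y1 ∈ M) (hx2 : x2 ∈ M) (hy2 : y2 ∈ M) :
    torsionField K (baseW K F A B) m ≤ M := by
  rw [torsionField, adjoin_le_iff]
  rintro c ⟨x, y, h, hm, hc⟩
  obtain ⟨a, b, hab⟩ := hbasis.2.2.1 _ hm
  have hG : Point.some x y h ∈ (Point.baseChange (W' := baseW K M A B) M F).range := hab ▸ add_mem
    (zsmul_mem ((some_mem_range_baseChange_iff M h1).mpr ⟨hx1, hy1⟩) a)
    (zsmul_mem ((some_mem_range_baseChange_iff M h2).mpr ⟨hx2, hy2⟩) b)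
  obtain ⟨hx, hy⟩ := (some_mem_range_baseChange_iff M h).mp hG
  rcases hc with rfl | rfl
  exacts [hx, hy]

theorem torsionField_eq_sup
    (hbasis : IsTorsionBasis m (Point.some x1 y1 h1) (Point.some x2 y2 h2)) :
    torsionField K (baseW K F A B) m = adjoin K {x1, x2} ⊔ K⟮y1⟯ ⊔ K⟮y2⟯ := by
  have hL : adjoin K {x1, x2} ≤ adjoin K {x1, x2} ⊔ K⟮y1⟯ ⊔ K⟮y2⟯ := le_sup_left.trans le_sup_left
  refine le_antisymm (torsionField_le_of_isTorsionBasis hbasis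
    (hL (subset_adjoin K _ (Set.mem_insert _ _)))
    (le_sup_left (a := adjoin K {x1, x2} ⊔ K⟮y1⟯)
      (le_sup_right (a := adjoin K {x1, x2}) (mem_adjoin_simple_self K y1)))
    (hL (subset_adjoin K _ (Set.mem_insert_of_mem _ rfl)))
    (le_sup_right (a := adjoin K {x1, x2} ⊔ K⟮y1⟯) (mem_adjoin_simple_self K y2))) ?_
  have coords_mem (x y : F) (h : (baseW K F A B).Nonsingular x y) (hm : m • Point.some x y h = 0) :
      x ∈ torsionField K (baseW K F A B) m ∧ y ∈ torsionField K (baseW K F A B) m :=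
    ⟨subset_adjoin K _ ⟨x, y, h, hm, .inl rfl⟩, subset_adjoin K _ ⟨x, y, h, hm, .inr rfl⟩⟩
  obtain ⟨hx1, hy1⟩ := coords_mem x1 y1 h1 hbasis.1
  obtain ⟨hx2, hy2⟩ := coords_mem x2 y2 h2 hbasis.2.1
  refine sup_le (sup_le ?_ (adjoin_simple_le_iff.mpr hy1)) (adjoin_simple_le_iff.mpr hy2)
  rw [adjoin_le_iff, Set.insert_subset_iff, Set.singleton_subset_iff]
  exact ⟨hx1, hx2⟩

end baseW

theorem stmt2_general (K : Type*) [Field K] (hchar2 : (2 : K) ≠ 0)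
    (Kbar : Type*) [Field Kbar] [Algebra K Kbar]
    (A B : K)
    (m : ℕ)
    (x1 y1 x2 y2 : Kbar)
    (h1 : (baseW K Kbar A B).Nonsingular x1 y1)
    (h2 : (baseW K Kbar A B).Nonsingular x2 y2)
    (hbasis : IsTorsionBasis m (WeierstrassCurve.Affine.Point.some _ _ h1)
      (WeierstrassCurve.Affine.Point.some _ _ h2)) :
    let L : IntermediateField K Kbar := IntermediateField.adjoin K {x1, x2}
    let Km : IntermediateField K Kbar := torsionField K (baseW K Kbar A B) m
    let c1 : Prop := IntermediateField.relfinrank L Km = 1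
    let c2 : Prop := IntermediateField.relfinrank L Km = 2 ∧
      L ⊔ IntermediateField.adjoin K {y1 * y2} = Km
    let c3 : Prop := IntermediateField.relfinrank L Km = 2 ∧ y1 * y2 ∈ L ∧
      L ⊔ IntermediateField.adjoin K {y1} = Km ∧ L ⊔ IntermediateField.adjoin K {y2} = Km
    let c4 : Prop := IntermediateField.relfinrank L Km = 4 ∧
      IntermediateField.relfinrank L (L ⊔ IntermediateField.adjoin K {y1 * y2}) = 2
    (c1 ∧ ¬c2 ∧ ¬c3 ∧ ¬c4) ∨ (¬c1 ∧ c2 ∧ ¬c3 ∧ ¬c4) ∨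
      (¬c1 ∧ ¬c2 ∧ c3 ∧ ¬c4) ∨ (¬c1 ∧ ¬c2 ∧ ¬c3 ∧ c4) := by
  classical
  have h2K : (2 : Kbar) ≠ 0 := by
    rw [← map_ofNat (algebraMap K Kbar) 2]
    exact (map_ne_zero _).mpr hchar2
  have hy1 : y1 ^ 2 ∈ adjoin K {x1, x2} :=
    sq_mem_of_baseW_equation h1.1 (subset_adjoin K _ (Set.mem_insert _ _))
  have hy2 : y2 ^ 2 ∈ adjoin K {x1, x2} :=
    sq_mem_of_baseW_equation h2.1 (subset_adjoin K _ (Set.mem_insert_of_mem _ rfl))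
  have hy0 : y1 = 0 ↔ y2 = 0 := by
    rw [← baseW_two_nsmul_some_eq_zero_iff h2K h1, ← baseW_two_nsmul_some_eq_zero_iff h2K h2]
    exact ⟨hbasis.two_nsmul_eq_zero, hbasis.symm.two_nsmul_eq_zero⟩
  exact biquadratic_exactly_one_case h2K hy1 hy2 hy0 (torsionField_eq_sup hbasis)

/-- With `L := K(x₁, x₂)`, exactly one of the four listed cases holds. -/
theorem stmt2 (K : Type*) [Field K] (hchar2 : (2 : K) ≠ 0) (hchar3 : (3 : K) ≠ 0)
    (Kbar : Type*) [Field Kbar] [Algebra K Kbar] [IsAlgClosure K Kbar]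
    (A B : K) (hΔ : 4 * A ^ 3 + 27 * B ^ 2 ≠ 0)
    (m : ℕ) (hm : 2 ≤ m) (hmchar : (m : K) ≠ 0)
    (x1 y1 x2 y2 : Kbar)
    (h1 : (baseW K Kbar A B).Nonsingular x1 y1)
    (h2 : (baseW K Kbar A B).Nonsingular x2 y2)
    (hbasis : IsTorsionBasis m (WeierstrassCurve.Affine.Point.some _ _ h1)
      (WeierstrassCurve.Affine.Point.some _ _ h2))
    (ζ : Kbar) (hζ : IsPrimitiveRoot ζ m) :
    let L : IntermediateField K Kbar := IntermediateField.adjoin K {x1, x2}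
    let Km : IntermediateField K Kbar := torsionField K (baseW K Kbar A B) m
    let c1 : Prop := IntermediateField.relfinrank L Km = 1
    let c2 : Prop := IntermediateField.relfinrank L Km = 2 ∧
      L ⊔ IntermediateField.adjoin K {y1 * y2} = Km
    let c3 : Prop := IntermediateField.relfinrank L Km = 2 ∧ y1 * y2 ∈ L ∧
      L ⊔ IntermediateField.adjoin K {y1} = Km ∧ L ⊔ IntermediateField.adjoin K {y2} = Km
    let c4 : Prop := IntermediateField.relfinrank L Km = 4 ∧
      IntermediateField.relfinrank L (L ⊔ IntermediateField.adjoin K {y1 * y2}) = 2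
    (c1 ∧ ¬c2 ∧ ¬c3 ∧ ¬c4) ∨ (¬c1 ∧ c2 ∧ ¬c3 ∧ ¬c4) ∨
      (¬c1 ∧ ¬c2 ∧ c3 ∧ ¬c4) ∨ (¬c1 ∧ ¬c2 ∧ ¬c3 ∧ c4) :=
  stmt2_general K hchar2 Kbar A B m x1 y1 x2 y2 h1 h2 hbasis
end

section
/- Let d ∈ {3, 4} and suppose d divides m. Let {Q1, Q2} be a ℤ/dℤ-basis of the d-torsion subgroup E[d]. Then K_m is the compositum of K_{m,x} and K(y(Q1), y(Q2)), where y(·) denotes the y-coordinate of a point. -/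
/-! Put `L = K_{m,x}(y(Q₁), y(Q₂))`. An automorphism `τ` of `K̄/L` fixes the x-coordinate of
every `P ∈ E[m]`, so it sends `P` to `±P`. It also fixes `Q₁`, and `Q₁ ≠ -Q₁` because `Q₁` has
order `d ∈ {3, 4}`; applying the dichotomy to `P + Q₁` then forces `τ P = P`. So `y(P)` is fixed
by every such `τ`. Finally `(2y(P) + a₁x(P) + a₃)² ∈ L`, and an element of `K̄ \ L` with square in
`L` is sent to its negative by some `τ`; as `2 ≠ 0`, this gives `y(P) ∈ L`. -/

open Polynomial IntermediateField WeierstrassCurve WeierstrassCurve.Affine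

theorem AddMonoidHom.apply_eq_self_of_forall_eq_self_or_eq_neg {G : Type*} [AddCommGroup G]
    {H : AddSubgroup G} (φ : G →+ G) (hφ : ∀ P ∈ H, φ P = P ∨ φ P = -P) {Q : G} (hQ : Q ∈ H)
    (hφQ : φ Q = Q) (hQ2 : Q + Q ≠ 0) {P : G} (hP : P ∈ H) : φ P = P := by
  rcases hφ P hP with hφP | hφP
  · exact hφP
  rcases hφ (P + Q) (add_mem hP hQ) with hsum | hsum <;> rw [map_add, hφP, hφQ] at hsum
  · rw [hφP, (add_left_inj Q).mp hsum]
  · refine absurd ?_ hQ2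
    calc Q + Q = (-P + Q) - -(P + Q) := by abel
      _ = 0 := by rw [hsum, sub_self]

theorem IntermediateField.exists_algHom_apply_eq_neg_of_sq_mem {K F : Type*} [Field K] [Field F]
    [Algebra K F] [IsAlgClosed F] [Algebra.IsAlgebraic K F] {L : IntermediateField K F} {z : F}
    (hz : z ∉ L) (hz2 : z ^ 2 ∈ L) : ∃ τ : F →ₐ[L] F, τ z = -z := by
  have : Algebra.IsAlgebraic L F := Algebra.IsAlgebraic.tower_top (K := K) L
  set c : L := ⟨z ^ 2, hz2⟩
  have hirr : Irreducible (X ^ 2 - C c) := by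
    refine X_pow_sub_C_irreducible_of_prime Nat.prime_two fun b hb ↦ hz ?_
    have hb' : (b : F) ^ 2 = z ^ 2 := congrArg Subtype.val hb
    rcases sq_eq_sq_iff_eq_or_eq_neg.mp hb' with h | h
    · exact h ▸ b.2
    · exact neg_eq_iff_eq_neg.mpr h ▸ neg_mem b.2
  have hmin : minpoly L z = X ^ 2 - C c :=
    (minpoly.eq_of_irreducible_of_monic hirr (by simp [c]) (monic_X_pow_sub_C c two_ne_zero)).symm
  exact exists_algHom_of_splits_of_aeval
    (fun s ↦ ⟨(Algebra.IsAlgebraic.isAlgebraic s).isIntegral, IsAlgClosed.splits _⟩)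
    (by simp [hmin, c])

namespace WeierstrassCurve.Affine

open scoped Classical

variable {K F : Type*} [Field K] [Field F] [Algebra K F] (W : Affine K)

lemma sub_negY_sq {x y : F} (h : (W⁄F).Equation x y) :
    (y - (W⁄F).negY x y) ^ 2 = 4 * x ^ 3 + algebraMap K F W.b₂ * x ^ 2
      + 2 * algebraMap K F W.b₄ * x + algebraMap K F W.b₆ := by
  rw [equation_iff] at h
  simp only [negY, baseChange_a₁, baseChange_a₂, baseChange_a₃, baseChange_a₄, baseChange_a₆, b₂,
    b₄, b₆, map_add, map_mul, map_pow, map_ofNat] at h ⊢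
  linear_combination 4 * h

namespace Point

lemma map_some_eq_self_or_eq_neg {x y : F} (h : (W⁄F).Nonsingular x y) (τ : F →ₐ[K] F)
    (hx : τ x = x) : map τ (some _ _ h) = some _ _ h ∨ map τ (some _ _ h) = -some _ _ h := by
  rw [map_some, neg_some]
  simp only [some.injEq, hx, true_and]
  exact Y_eq_of_X_eq ((W.baseChange_nonsingular τ.injective ..).mpr h).1 h.1 hx

lemma map_eq_self_of_nsmul_eq_zero (τ : F →ₐ[K] F) {m : ℕ}
    (hX : ∀ x y (h : (W⁄F).Nonsingular x y), m • some _ _ h = 0 → τ x = x)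
    {Q : (W⁄F).Point} (hQm : m • Q = 0) (hτQ : map τ Q = Q) (hQ2 : Q + Q ≠ 0)
    {P : (W⁄F).Point} (hPm : m • P = 0) : map τ P = P := by
  refine (map τ).apply_eq_self_of_forall_eq_self_or_eq_neg (H := AddSubgroup.torsionBy _ m) ?_
    (AddSubgroup.torsionBy.nsmul_iff.mpr hQm) hτQ hQ2 (AddSubgroup.torsionBy.nsmul_iff.mpr hPm)
  rintro (_ | ⟨x, y, h⟩) hR
  · exact .inl rfl
  · exact map_some_eq_self_or_eq_neg W h τ (hX _ _ h (AddSubgroup.torsionBy.nsmul_iff.mp hR))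

end Point

theorem Y_mem_of_nsmul_eq_zero [IsAlgClosed F] [Algebra.IsAlgebraic K F] (h2 : (2 : F) ≠ 0)
    {L : IntermediateField K F} {m : ℕ}
    (hX : ∀ x y (h : (W⁄F).Nonsingular x y), m • Point.some _ _ h = 0 → x ∈ L)
    {xQ yQ : F} {hQ : (W⁄F).Nonsingular xQ yQ} (hQm : m • Point.some _ _ hQ = 0)
    (hQ2 : Point.some _ _ hQ + Point.some _ _ hQ ≠ 0) (hyQ : yQ ∈ L)
    {x y : F} {h : (W⁄F).Nonsingular x y} (hm : m • Point.some _ _ h = 0) : y ∈ L := by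
  have hx : x ∈ L := hX x y h hm
  have hfix : ∀ τ : F →ₐ[K] F, (∀ z ∈ L, τ z = z) → τ y = y := by
    intro τ hτ
    have hτQ : Point.map τ (Point.some _ _ hQ) = Point.some _ _ hQ := by
      rw [Point.map_some, Point.some.injEq]
      exact ⟨hτ _ (hX _ _ hQ hQm), hτ _ hyQ⟩
    have hτP := Point.map_eq_self_of_nsmul_eq_zero W τ (fun x y h hm ↦ hτ _ (hX x y h hm))
      hQm hτQ hQ2 hm
    rw [Point.map_some, Point.some.injEq] at hτP
    exact hτP.2
  -- `z = 2y + a₁x + a₃` completes the square.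
  set z := y - (W⁄F).negY x y with hz_def
  have hz2 : z ^ 2 ∈ L := by
    rw [sub_negY_sq W h.1]
    have hc (a : K) : algebraMap K F a ∈ L := L.algebraMap_mem a
    exact add_mem (add_mem (add_mem (mul_mem (ofNat_mem L 4) (pow_mem hx 3))
      (mul_mem (hc _) (pow_mem hx 2))) (mul_mem (mul_mem (ofNat_mem L 2) (hc _)) hx)) (hc _)
  have hz : z ∈ L := by
    by_contra hz
    obtain ⟨τ, hτz⟩ := exists_algHom_apply_eq_neg_of_sq_mem hz hz2
    have hτ : ∀ w ∈ L, τ w = w := fun w hw ↦ τ.commutes ⟨w, hw⟩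
    have hτz' : τ z = z := by
      have hτy : τ y = y := hfix (τ.restrictScalars K) hτ
      rw [hz_def, map_sub, ← baseChange_negY (W' := W) τ, hτ x hx, hτy]
    have h2z : 2 * z = 0 := by linear_combination hτz - hτz'
    exact hz ((mul_eq_zero.mp h2z).resolve_left h2 ▸ zero_mem L)
  have hy : y = (z - algebraMap K F W.a₁ * x - algebraMap K F W.a₃) / 2 := by
    rw [hz_def, negY, baseChange_a₁, baseChange_a₃]
    field_simp
    ring
  rw [hy]
  exact div_mem (sub_mem (sub_mem hz (mul_mem (L.algebraMap_mem _) hx)) (L.algebraMap_mem _))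
    (ofNat_mem L 2)

end WeierstrassCurve.Affine

section TorsionBasis

open scoped Classical

variable {F : Type*} [Field F] {W : Affine F} {n : ℕ} {P Q : W.Point}

lemma IsTorsionBasis.nsmul_left_eq_zero_of_dvd (h : IsTorsionBasis n P Q) {m : ℕ} (hnm : n ∣ m) :
    m • P = 0 := by
  obtain ⟨k, rfl⟩ := hnm
  rw [mul_comm, mul_smul, h.1, smul_zero]

lemma IsTorsionBasis.nsmul_right_eq_zero_of_dvd (h : IsTorsionBasis n P Q) {m : ℕ}
    (hnm : n ∣ m) : m • Q = 0 := by
  obtain ⟨k, rfl⟩ := hnm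
  rw [mul_comm, mul_smul, h.2.1, smul_zero]

lemma IsTorsionBasis.add_self_left_ne_zero (h : IsTorsionBasis n P Q) (hn : ¬ n ∣ 2) :
    P + P ≠ 0 := fun hP ↦
  hn <| Int.natCast_dvd_natCast.mp (h.2.2.2 2 0 (by rw [two_zsmul, zero_zsmul, add_zero, hP])).1

end TorsionBasis

section TorsionField

open scoped Classical

variable (K : Type*) {F : Type*} [Field K] [Field F] [Algebra K F] {W : Affine F} {m : ℕ}

lemma X_mem_torsionXField {x y : F} (h : W.Nonsingular x y) (hm : m • Point.some _ _ h = 0) :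
    x ∈ torsionXField K W m :=
  subset_adjoin K _ ⟨y, h, hm⟩

lemma X_mem_torsionField {x y : F} (h : W.Nonsingular x y) (hm : m • Point.some _ _ h = 0) :
    x ∈ torsionField K W m :=
  subset_adjoin K _ ⟨x, y, h, hm, .inl rfl⟩

lemma Y_mem_torsionField {x y : F} (h : W.Nonsingular x y) (hm : m • Point.some _ _ h = 0) :
    y ∈ torsionField K W m :=
  subset_adjoin K _ ⟨x, y, h, hm, .inr rfl⟩

lemma torsionXField_le_torsionField : torsionXField K W m ≤ torsionField K W m :=
  adjoin_le_iff.mpr fun _ ⟨_, h, hm⟩ ↦ X_mem_torsionField K h hm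

theorem torsionField_baseChange_eq_torsionXField_sup_adjoin [IsAlgClosed F]
    [Algebra.IsAlgebraic K F] (W : Affine K) (h2 : (2 : F) ≠ 0) {n : ℕ} (hn : ¬ n ∣ 2)
    (hnm : n ∣ m) {xQ₁ yQ₁ xQ₂ yQ₂ : F} {hQ₁ : (W⁄F).Nonsingular xQ₁ yQ₁}
    {hQ₂ : (W⁄F).Nonsingular xQ₂ yQ₂}
    (hQ : IsTorsionBasis n (Point.some _ _ hQ₁) (Point.some _ _ hQ₂)) :
    torsionField K (W⁄F) m = torsionXField K (W⁄F) m ⊔ adjoin K {yQ₁, yQ₂} := by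
  have hX {x y : F} (h : (W⁄F).Nonsingular x y) (hm : m • Point.some _ _ h = 0) :
      x ∈ torsionXField K (W⁄F) m ⊔ adjoin K {yQ₁, yQ₂} :=
    le_sup_left (α := IntermediateField K F) (X_mem_torsionXField K h hm)
  apply le_antisymm
  · rw [torsionField, adjoin_le_iff]
    rintro c ⟨x, y, h, hm, rfl | rfl⟩
    · exact hX h hm
    · exact W.Y_mem_of_nsmul_eq_zero h2 (fun _ _ ↦ hX) (hQ.nsmul_left_eq_zero_of_dvd hnm)
        (hQ.add_self_left_ne_zero hn) (le_sup_right (α := IntermediateField K F)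
          (subset_adjoin K _ (Set.mem_insert _ _))) hm
  · refine sup_le (torsionXField_le_torsionField K) (adjoin_le_iff.mpr ?_)
    rintro c (rfl | rfl)
    exacts [Y_mem_torsionField K hQ₁ (hQ.nsmul_left_eq_zero_of_dvd hnm),
      Y_mem_torsionField K hQ₂ (hQ.nsmul_right_eq_zero_of_dvd hnm)]

end TorsionField

theorem stmt14_general (K : Type*) [Field K] (hchar2 : (2 : K) ≠ 0)
    (Kbar : Type*) [Field Kbar] [Algebra K Kbar] [IsAlgClosure K Kbar]
    (A B : K)
    (m : ℕ)
    (d : ℕ) (hd : d = 3 ∨ d = 4) (hdm : d ∣ m)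
    (xQ1 yQ1 xQ2 yQ2 : Kbar)
    (hQ1 : (baseW K Kbar A B).Nonsingular xQ1 yQ1)
    (hQ2 : (baseW K Kbar A B).Nonsingular xQ2 yQ2)
    (hQbasis : IsTorsionBasis d (WeierstrassCurve.Affine.Point.some _ _ hQ1)
      (WeierstrassCurve.Affine.Point.some _ _ hQ2)) :
    torsionField K (baseW K Kbar A B) m
      = torsionXField K (baseW K Kbar A B) m ⊔ IntermediateField.adjoin K {yQ1, yQ2} := by
  have := IsAlgClosure.isAlgClosed K (K := Kbar)
  have h2 : (2 : Kbar) ≠ 0 := by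
    rw [← map_ofNat (algebraMap K Kbar)]
    exact (_root_.map_ne_zero _).mpr hchar2
  have hd2 : ¬ d ∣ 2 := by rcases hd with rfl | rfl <;> norm_num
  let W : Affine K := { a₁ := 0, a₂ := 0, a₃ := 0, a₄ := A, a₆ := B }
  have hW : baseW K Kbar A B = W⁄Kbar := by ext <;> simp [baseW, W]
  -- `baseW K Kbar A B` and `W⁄Kbar` are only propositionally equal; transport the points along it.
  generalize baseW K Kbar A B = E at *
  subst hW
  exact torsionField_baseChange_eq_torsionXField_sup_adjoin K W h2 hd2 hdm hQbasis

/-- If `d ∈ {3, 4}` divides `m` and `{Q₁, Q₂}` is a `ℤ/dℤ`-basis of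
`E[d]`, then `K_m` is the compositum of `K_{m,x}` and `K(y(Q₁), y(Q₂))`. -/
theorem stmt14 (K : Type*) [Field K] (hchar2 : (2 : K) ≠ 0) (hchar3 : (3 : K) ≠ 0)
    (Kbar : Type*) [Field Kbar] [Algebra K Kbar] [IsAlgClosure K Kbar]
    (A B : K) (hΔ : 4 * A ^ 3 + 27 * B ^ 2 ≠ 0)
    (m : ℕ) (hm : 2 ≤ m) (hmchar : (m : K) ≠ 0)
    (x1 y1 x2 y2 : Kbar)
    (h1 : (baseW K Kbar A B).Nonsingular x1 y1)
    (h2 : (baseW K Kbar A B).Nonsingular x2 y2)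
    (hbasis : IsTorsionBasis m (WeierstrassCurve.Affine.Point.some _ _ h1)
      (WeierstrassCurve.Affine.Point.some _ _ h2))
    (ζ : Kbar) (hζ : IsPrimitiveRoot ζ m)
    (d : ℕ) (hd : d = 3 ∨ d = 4) (hdm : d ∣ m)
    (xQ1 yQ1 xQ2 yQ2 : Kbar)
    (hQ1 : (baseW K Kbar A B).Nonsingular xQ1 yQ1)
    (hQ2 : (baseW K Kbar A B).Nonsingular xQ2 yQ2)
    (hQbasis : IsTorsionBasis d (WeierstrassCurve.Affine.Point.some _ _ hQ1)
      (WeierstrassCurve.Affine.Point.some _ _ hQ2)) :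
    torsionField K (baseW K Kbar A B) m
      = torsionXField K (baseW K Kbar A B) m ⊔ IntermediateField.adjoin K {yQ1, yQ2} :=
  stmt14_general K hchar2 Kbar A B m d hd hdm xQ1 yQ1 xQ2 yQ2 hQ1 hQ2 hQbasis
end
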